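/- arXiv:gr-qc/0406121 — 2 statements merged into one kernel-verified Lean document; each statement's English description precedes it below -/
import Mathlib

section
/- Let v : ℝ → M_r(ℂ) be a smooth curve of invertible r×r Hermitian matrices, r ≥ 2, satisfying the geodesic condition that for all indices, Σ over permutations giving ε_{AB…C} ε_{A'B'…C'} v̇^{BB'} v^{CC'} ⋯ v^{DD'} = 0 (equivalently, the symmetrized contraction of v̇ with r−1 copies of v against the rank-r chronometric tensor vanishes). Then v̇ = 0, i.e. v is constant. -/
attribute [local instance] Matrix.normedAddCommGroup Matrix.normedSpace

/-- The chronometric tensor: the full polarization of the determinant,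
a symmetric r-linear form with chron r (fun _ => u) = r! * det u. -/
noncomputable def chron (r : ℕ) (u : Fin r → Matrix (Fin r) (Fin r) ℂ) : ℂ :=
  ∑ S : Finset (Fin r), (-1 : ℂ) ^ (r - S.card) * (∑ i ∈ S, u i).det

/-!
Expanding each determinant in `chron` multilinearly in its rows and applying inclusion–exclusion
over `S`, `chron c` becomes the mixed discriminant `∑ σ, det (row k taken from c (σ k))`. When all
but two of the `c i` equal `1`, every term is a `2 × 2` minor, and summing over `σ` gives
`chron (u, m, 1, …, 1) = (r - 2)! * (tr u * tr m - tr (u * m))`. Factoring `v` out on the left,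
the geodesic condition says this vanishes for `m = v⁻¹ v̇` and every `u`: `u = 1` gives
`(r - 1) tr m = 0`, and then `tr (u * m) = 0` for all `u` forces `m = 0`.
-/

open Finset Nat

theorem Finset.sum_superset_neg_one_pow_card_compl {α R : Type*} [Fintype α] [DecidableEq α]
    [CommRing R] (T : Finset α) :
    ∑ S : Finset α, (if T ⊆ S then (-1 : R) ^ (Fintype.card α - #S) else 0) =
      if T = univ then 1 else 0 := by
  rw [← Fintype.sum_bijective compl compl_involutive.bijective
    (fun U => if U ⊆ Tᶜ then (-1 : R) ^ #U else 0) _ fun U => ?_]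
  · have := congrArg (Int.cast : ℤ → R) (sum_powerset_neg_one_pow_card (x := Tᶜ))
    push_cast at this
    rw [← sum_filter, filter_subset_univ, this]
    exact if_congr (compl_eq_empty_iff T) rfl rfl
  · rw [card_compl, Nat.sub_sub_self (card_le_univ U)]
    exact if_congr subset_compl_comm rfl rfl

namespace Equiv.Perm

theorem exists_apply_eq_and_apply_eq {α : Type*} {a b p q : α} (hab : a ≠ b) (hpq : p ≠ q) :
    ∃ τ : Perm α, τ a = p ∧ τ b = q := by
  have inj {x y : α} (h : x ≠ y) : Function.Injective ![x, y] := by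
    intro i j hij; fin_cases i <;> fin_cases j <;> simp_all [eq_comm]
  obtain ⟨τ, hτ⟩ := exists_extending_pair _ _ (inj hab) (inj hpq)
  exact ⟨τ, hτ 0, hτ 1⟩

variable {α : Type*} [Fintype α] [DecidableEq α]

theorem card_apply_eq_and_apply_eq {a b p q : α} (hab : a ≠ b) (hpq : p ≠ q) :
    #{σ : Perm α | σ a = p ∧ σ b = q} = #{σ : Perm α | σ a = a ∧ σ b = b} := by
  obtain ⟨τ, hτa, hτb⟩ := exists_apply_eq_and_apply_eq hab hpq
  refine card_nbij' (τ⁻¹ * ·) (τ * ·) (fun σ hσ => ?_) (fun σ hσ => ?_) (fun σ _ => ?_)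
    fun σ _ => ?_
  all_goals simp_all [Equiv.symm_apply_eq]

theorem sum_apply_apply {M : Type*} [AddCommMonoid M] {a b : α} (hab : a ≠ b)
    (h : α → α → M) (hdiag : ∀ p, h p p = 0) :
    ∑ σ : Perm α, h (σ a) (σ b) =
      #{σ : Perm α | σ a = a ∧ σ b = b} • ∑ p, ∑ q, h p q := by
  rw [← sum_fiberwise univ (fun σ : Perm α => (σ a, σ b)) fun σ => h (σ a) (σ b),
    Fintype.sum_prod_type, smul_sum]
  refine sum_congr rfl fun p _ => ?_
  rw [smul_sum]
  refine sum_congr rfl fun q _ => ?_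
  have hfiber :
      ∀ σ ∈ ({σ | (σ a, σ b) = (p, q)} : Finset (Perm α)), h (σ a) (σ b) = h p q :=
    fun σ hσ => by
      obtain ⟨hσa, hσb⟩ := Prod.mk.inj (mem_filter.1 hσ).2
      rw [hσa, hσb]
  rw [sum_congr rfl hfiber, sum_const]
  obtain rfl | hpq := eq_or_ne p q
  · simp [hdiag]
  · simp only [Prod.mk.injEq, card_apply_eq_and_apply_eq hab hpq]

theorem card_apply_eq_self_and_apply_eq_self {a b : α} (hab : a ≠ b) :
    #{σ : Perm α | σ a = a ∧ σ b = b} = (Fintype.card α - 2)! := by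
  -- Counting all permutations: `(card α)! = N * (card α * (card α - 1))`.
  have h := sum_apply_apply hab (fun p q => if p ≠ q then 1 else 0) fun _ => if_neg (by simp)
  simp only [ne_eq, EmbeddingLike.apply_eq_iff_eq, hab, not_false_eq_true, if_true, sum_const,
    Finset.card_univ, smul_eq_mul, mul_one, sum_boole, filter_ne, card_erase_of_mem (mem_univ _),
    Fintype.card_perm, Nat.cast_id] at h
  have h2 : 2 ≤ Fintype.card α := Fintype.one_lt_card_iff.2 ⟨a, b, hab⟩
  rw [← factorial_mul_descFactorial h2, descFactorial_succ, descFactorial_one,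
    mul_comm (_ - 1)] at h
  exact (Nat.eq_of_mul_eq_mul_right (Nat.mul_pos (by omega) (by omega)) h).symm

end Equiv.Perm

namespace Matrix

variable {n R : Type*} [Fintype n] [DecidableEq n] [CommRing R]

theorem det_sum_eq_sum_piFinset {ι : Type*} [DecidableEq ι] (c : ι → Matrix n n R)
    (S : Finset ι) :
    (∑ i ∈ S, c i).det =
      ∑ f ∈ Fintype.piFinset fun _ : n => S, (of fun k => c (f k) k).det := by
  rw [show ∑ i ∈ S, c i = fun k => ∑ i ∈ S, c i k from
    funext fun k => Finset.sum_apply k S c]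
  exact (detRowAlternating (n := n) (R := R)).map_sum_finset (fun i k => c k i) fun _ => S

theorem det_eq_of_row_eq_one_except_two {A : Matrix n n R} {p q : n} (hpq : p ≠ q)
    (hA : ∀ i, i ≠ p → i ≠ q → A i = (1 : Matrix n n R) i) :
    A.det = A p p * A q q - A p q * A q p := by
  -- `A = 1 + U * V` with `U` of width two, so Weinstein–Aronszajn leaves a `2 × 2` determinant.
  set U : Matrix n (Fin 2) R := of fun i k => (1 : Matrix n n R) i (![p, q] k) with hU
  set V : Matrix (Fin 2) n R := of fun k j => (A - 1) (![p, q] k) j with hV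
  have hUV : 1 + U * V = A := by
    ext i j
    rw [add_apply, mul_apply, Fin.sum_univ_two]
    simp only [hU, hV, of_apply, sub_apply]
    rw [show ![p, q] 0 = p from rfl, show ![p, q] 1 = q from rfl]
    by_cases hip : i = p
    · subst hip; simp [one_apply_ne hpq]
    by_cases hiq : i = q
    · subst hiq; simp [one_apply_ne hip]
    simp [one_apply_ne hip, one_apply_ne hiq, hA i hip hiq]
  have hVU : 1 + V * U = A.submatrix ![p, q] ![p, q] := by
    ext k l
    simp only [hU, hV, add_apply, mul_apply, of_apply, one_apply, mul_ite, mul_one, mul_zero,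
      sum_ite_eq', mem_univ, if_true, sub_apply, submatrix_apply]
    fin_cases k <;> fin_cases l <;> simp [hpq, hpq.symm]
  calc A.det = (1 + U * V).det := by rw [hUV]
    _ = (A.submatrix ![p, q] ![p, q]).det := by rw [det_one_add_mul_comm, hVU]
    _ = A p p * A q q - A p q * A q p := det_fin_two _

theorem eq_zero_of_trace_mul_trace_eq_trace_mul [IsDomain R] [CharZero R] {m : Matrix n n R}
    (hn : Fintype.card n ≠ 1) (h : ∀ u : Matrix n n R, u.trace * m.trace = (u * m).trace) :
    m = 0 := by
  have htr : m.trace = 0 := by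
    have h1 := h 1
    rw [trace_one, Matrix.one_mul] at h1
    have h2 : ((Fintype.card n : R) - 1) * m.trace = 0 := by linear_combination h1
    exact (mul_eq_zero.1 h2).resolve_left (sub_ne_zero.2 (by exact_mod_cast hn))
  refine ext_iff_trace_mul_left.2 fun u => ?_
  rw [← h u, htr, mul_zero, Matrix.mul_zero, trace_zero]

end Matrix

open Matrix

theorem chron_eq_sum_perm (r : ℕ) (c : Fin r → Matrix (Fin r) (Fin r) ℂ) :
    chron r c = ∑ σ : Equiv.Perm (Fin r), (of fun k => c (σ k) k).det := by
  set D : (Fin r → Fin r) → ℂ := fun f => (of fun k => c (f k) k).det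
  calc chron r c
      = ∑ S : Finset (Fin r), ∑ f : Fin r → Fin r,
          if univ.image f ⊆ S then (-1 : ℂ) ^ (r - #S) * D f else 0 := by
        refine sum_congr rfl fun S _ => ?_
        rw [det_sum_eq_sum_piFinset, mul_sum, ← sum_filter]
        congr 1
        ext f
        simp [Fintype.mem_piFinset, image_subset_iff]
    _ = ∑ f : Fin r → Fin r, if univ.image f = univ then D f else 0 := by
        rw [sum_comm]
        refine sum_congr rfl fun f _ => ?_
        have h := sum_superset_neg_one_pow_card_compl (R := ℂ) (univ.image f)
        rw [Fintype.card_fin] at h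
        simp only [← ite_zero_mul, ← sum_mul, h]
        rw [ite_zero_mul, one_mul]
    _ = ∑ σ : Equiv.Perm (Fin r), D σ := by
        rw [← sum_filter]
        refine (sum_bij (fun (σ : Equiv.Perm (Fin r)) _ => ⇑σ) (fun σ _ => ?_)
          (fun _ _ _ _ h => DFunLike.coe_injective h) (fun f hf => ?_) fun _ _ => rfl).symm
        · simp [image_univ_of_surjective σ.surjective]
        · simp only [mem_filter, mem_univ, true_and, eq_univ_iff_forall, mem_image] at hf
          exact ⟨.ofBijective f ⟨Finite.injective_iff_surjective.2 hf, hf⟩, mem_univ _, rfl⟩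

theorem chron_eq_of_eq_one_except_two {r : ℕ} {c : Fin r → Matrix (Fin r) (Fin r) ℂ}
    {a b : Fin r} (hab : a ≠ b) (hc : ∀ i, i ≠ a → i ≠ b → c i = 1) :
    chron r c = (r - 2)! * ((c a).trace * (c b).trace - (c a * c b).trace) := by
  let g : Fin r → Fin r → ℂ := fun p q => c a p p * c b q q - c a p q * c b q p
  have hterm (σ : Equiv.Perm (Fin r)) :
      (of fun k => c (σ k) k).det = g (σ⁻¹ a) (σ⁻¹ b) := by
    refine (det_eq_of_row_eq_one_except_two (σ⁻¹.injective.ne hab) fun i hia hib => ?_).trans ?_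
    · show c (σ i) i = _
      rw [hc (σ i) (fun h => hia (by simp [← h])) fun h => hib (by simp [← h])]
    · simp [g]
  have hinv : ∑ σ : Equiv.Perm (Fin r), g (σ⁻¹ a) (σ⁻¹ b) =
      ∑ σ : Equiv.Perm (Fin r), g (σ a) (σ b) :=
    Fintype.sum_equiv (Equiv.inv _) _ _ fun _ => rfl
  rw [chron_eq_sum_perm, sum_congr rfl fun σ _ => hterm σ, hinv,
    Equiv.Perm.sum_apply_apply hab g fun p => sub_self _,
    Equiv.Perm.card_apply_eq_self_and_apply_eq_self hab, Fintype.card_fin, nsmul_eq_mul]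
  simp only [g, trace, Matrix.diag, mul_apply, sum_sub_distrib, Finset.sum_mul_sum]

theorem chron_mul_left (r : ℕ) (v : Matrix (Fin r) (Fin r) ℂ)
    (c : Fin r → Matrix (Fin r) (Fin r) ℂ) :
    chron r (fun i => v * c i) = v.det * chron r c := by
  rw [chron, chron, mul_sum]
  refine sum_congr rfl fun S _ => ?_
  rw [← Matrix.mul_sum, det_mul, mul_left_comm]

theorem chron_ite_zero_one {r : ℕ} (hr : 2 ≤ r) (u m : Matrix (Fin r) (Fin r) ℂ) :
    chron r (fun i => if (i : ℕ) = 0 then u else if (i : ℕ) = 1 then m else 1) =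
      (r - 2)! * (u.trace * m.trace - (u * m).trace) := by
  refine (chron_eq_of_eq_one_except_two (a := ⟨0, by omega⟩) (b := ⟨1, by omega⟩) (by simp)
    fun i hi0 hi1 => ?_).trans ?_
  · rw [if_neg fun h => hi0 (Fin.ext h), if_neg fun h => hi1 (Fin.ext h)]
  · simp

theorem stmt7_general (r : ℕ) (hr : 2 ≤ r)
    (v w : ℝ → Matrix (Fin r) (Fin r) ℂ)
    (hinv : ∀ t, IsUnit (v t).det)
    (hgeo : ∀ (t : ℝ) (u : Matrix (Fin r) (Fin r) ℂ),
      chron r (fun i => if (i : ℕ) = 0 then u else if (i : ℕ) = 1 then w t else v t) = 0) :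
    ∀ t, w t = 0 := by
  intro t
  set m := (v t)⁻¹ * w t
  have hvm : v t * m = w t := by
    rw [← Matrix.mul_assoc, mul_nonsing_inv _ (hinv t), Matrix.one_mul]
  have htrace (u : Matrix (Fin r) (Fin r) ℂ) : u.trace * m.trace = (u * m).trace := by
    have h := hgeo t (v t * u)
    have hfactor :
        (fun i : Fin r => if (i : ℕ) = 0 then v t * u else if (i : ℕ) = 1 then w t else v t) =
          fun i : Fin r => v t * if (i : ℕ) = 0 then u else if (i : ℕ) = 1 then m else 1 := by
      funext i
      split_ifs <;> simp [hvm]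
    rw [hfactor, chron_mul_left, chron_ite_zero_one hr] at h
    simpa [(hinv t).ne_zero, factorial_ne_zero, sub_eq_zero] using h
  have hm : m = 0 := eq_zero_of_trace_mul_trace_eq_trace_mul (by rw [Fintype.card_fin]; omega) htrace
  rw [← hvm, hm, Matrix.mul_zero]

/-- If a smooth curve of invertible Hermitian matrices satisfies the geodesic
condition g(·, v̇, v, …, v) = 0 then v̇ = 0, i.e. v is constant. -/
theorem stmt7 (r : ℕ) (hr : 2 ≤ r)
    (v w : ℝ → Matrix (Fin r) (Fin r) ℂ)
    (hherm : ∀ t, (v t).IsHermitian)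
    (hinv : ∀ t, IsUnit (v t).det)
    (hderiv : ∀ t, HasDerivAt v (w t) t)
    (hgeo : ∀ (t : ℝ) (u : Matrix (Fin r) (Fin r) ℂ),
      chron r (fun i => if (i : ℕ) = 0 then u else if (i : ℕ) = 1 then w t else v t) = 0) :
    ∀ t, w t = 0 :=
  stmt7_general r hr v w hinv hgeo
end

section
/- Let n ≥ 1 and let ρ : M (space of Hermitian 2n×2n matrices, viewed as 2×2 blocks of n×n matrices x^{AA'i}_j) → H (Hermitian 2×2 matrices) be a real-linear map such that (i) ρ(0) = 0; (ii) ρ is Poincaré invariant: ρ((l ⊗ I_n) x (l ⊗ I_n)* + b ⊗ I_n) = l ρ(x) l* + b for all l ∈ SL(2,ℂ), Hermitian 2×2 b, and x ∈ M; (iii) ρ is causal: if x ∈ M is positive semi-definite then ρ(x) is positive semi-definite (as a 2×2 matrix). Then there exists an n×n density matrix σ (Hermitian, positive semi-definite, trace 1) such that ρ(x)^{AA'} = Σ_{i,j} σ^j_i x^{AA'i}_j, i.e. ρ is the partial trace against a density matrix. -/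
/-!
Extend `ρ` complex-linearly to `Φ : M_{2n}(ℂ) → M_2(ℂ)`, `Φ z = ρ (ℜ z) + i ρ (ℑ z)`.
For fixed `a ∈ M_n(ℂ)`, the map `u ↦ Φ (u ⊗ a)` on `M_2(ℂ)` commutes with `u ↦ l u l*`
for every `l ∈ SL(2, ℂ)`: the diagonal element `diag(1 + i, (1 - i)/2)` forces it to be
diagonal in the matrix units, and a unipotent element forces all its eigenvalues to agree,
so `Φ (u ⊗ a) = λ(a) u` for a linear functional `λ`. Writing `λ(a) = tr(σ a)` gives
`Φ z = Σ_{ij} σ_{ji} z_{·i,·j}`; translation invariance gives `tr σ = λ(1) = 1`, and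
causality applied to `E₀₀ ⊗ v v*` gives `σ ≥ 0`.
-/

open Matrix ComplexOrder

open Kronecker ComplexStarModule

local notation "𝕄₂" => Matrix (Fin 2) (Fin 2) ℂ

namespace LinearMap

section Complexification

variable {A B : Type*} [AddCommGroup A] [Module ℂ A] [StarAddMonoid A] [StarModule ℂ A]
  [AddCommGroup B] [Module ℂ B] [StarAddMonoid B] [StarModule ℂ B]

noncomputable def complexifySelfAdjoint (f : selfAdjoint A →ₗ[ℝ] selfAdjoint B) :
    A →ₗ[ℂ] B where
  toFun a := f (ℜ a) + Complex.I • (f (ℑ a) : B)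
  map_add' a b := by
    simp only [map_add, AddSubgroup.coe_add, smul_add]
    abel
  map_smul' z a := by
    simp only [realPart_smul, imaginaryPart_smul, map_add, map_sub, map_smul,
      AddSubgroup.coe_add, AddSubgroup.coe_sub, selfAdjoint.val_smul, RingHom.id_apply]
    conv_rhs => rw [← Complex.re_add_im z]
    rw [← Complex.coe_smul, ← Complex.coe_smul, ← Complex.coe_smul, ← Complex.coe_smul]
    match_scalars
    · ring
    · linear_combination -(z.im : ℂ) * Complex.I_mul_I

variable (f : selfAdjoint A →ₗ[ℝ] selfAdjoint B)

theorem complexifySelfAdjoint_of_isSelfAdjoint {a : A} (ha : IsSelfAdjoint a) :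
    f.complexifySelfAdjoint a = f ⟨a, ha⟩ := by
  have hre : ℜ a = ⟨a, ha⟩ := Subtype.ext ha.coe_realPart
  simp [complexifySelfAdjoint, hre, ha.imaginaryPart]

theorem complexifySelfAdjoint_star (a : A) :
    f.complexifySelfAdjoint (star a) = star (f.complexifySelfAdjoint a) := by
  have hre : ℜ (star a) = ℜ a := by ext; simp [realPart_apply_coe, add_comm]
  have him : ℑ (star a) = -ℑ a := by ext; simp [imaginaryPart_apply_coe, ← smul_neg]
  simp [complexifySelfAdjoint, hre, him, star_add, star_smul, (f _).prop.star_eq]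

end Complexification

theorem ext_selfAdjoint {A B : Type*} [AddCommGroup A] [Module ℂ A] [StarAddMonoid A]
    [StarModule ℂ A] [AddCommMonoid B] [Module ℂ B] {g h : A →ₗ[ℂ] B}
    (hgh : ∀ x : selfAdjoint A, g x = h x) : g = h :=
  ext_on span_selfAdjoint fun x hx => hgh ⟨x, hx⟩

theorem complexifySelfAdjoint_conj {A B : Type*} [Ring A] [StarRing A] [Algebra ℂ A]
    [StarModule ℂ A] [Ring B] [StarRing B] [Algebra ℂ B] [StarModule ℂ B]
    (f : selfAdjoint A →ₗ[ℝ] selfAdjoint B) (p : A) (q : B)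
    (hf : ∀ x y : selfAdjoint A, (y : A) = p * x * star p → (f y : B) = q * f x * star q)
    (a : A) :
    f.complexifySelfAdjoint (p * a * star p) = q * f.complexifySelfAdjoint a * star q := by
  have h := ext_selfAdjoint
    (g := f.complexifySelfAdjoint ∘ₗ mulLeftRight ℂ (p, star p))
    (h := mulLeftRight ℂ (q, star q) ∘ₗ f.complexifySelfAdjoint) fun x => by
      simp only [comp_apply, mulLeftRight_apply,
        f.complexifySelfAdjoint_of_isSelfAdjoint x.prop,
        f.complexifySelfAdjoint_of_isSelfAdjoint (x.prop.conjugate p)]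
      exact hf x _ rfl
  simpa [mulLeftRight_apply] using DFunLike.congr_fun h a

end LinearMap

namespace Matrix

variable {ι R : Type*}

theorem diagonal_mul_mul_conjTranspose_apply [Fintype ι] [DecidableEq ι] [Semiring R]
    [StarRing R] (d : ι → R) (u : Matrix ι ι R) (i j : ι) :
    (diagonal d * u * (diagonal d)ᴴ) i j = d i * u i j * star (d j) := by
  rw [diagonal_conjTranspose, mul_diagonal, diagonal_mul, Pi.star_apply]

def traceDual [DecidableEq ι] [CommSemiring R] (f : Matrix ι ι R →ₗ[R] R) : Matrix ι ι R :=
  of fun i j => f (single j i 1)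

theorem trace_traceDual_mul [Fintype ι] [DecidableEq ι] [CommSemiring R]
    (f : Matrix ι ι R →ₗ[R] R) (a : Matrix ι ι R) :
    (traceDual f * a).trace = f a := by
  conv_lhs => rw [matrix_eq_sum_single a]
  conv_rhs => rw [matrix_eq_sum_single a]
  simp only [Matrix.mul_sum, trace_sum, trace_mul_single, map_sum, traceDual, of_apply]
  refine Finset.sum_congr rfl fun i _ => Finset.sum_congr rfl fun j _ => ?_
  rw [← mul_one (a i j), ← smul_eq_mul, ← smul_single, map_smul, smul_eq_mul, mul_one]
  simp [mul_comm]

theorem posSemidef_traceDual [Fintype ι] [DecidableEq ι] [CommRing R] [PartialOrder R]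
    [StarRing R] [StarOrderedRing R]
    (f : Matrix ι ι R →ₗ[R] R) (hstar : ∀ a, f aᴴ = star (f a))
    (hpos : ∀ a : Matrix ι ι R, a.PosSemidef → 0 ≤ f a) : (traceDual f).PosSemidef := by
  refine .of_dotProduct_mulVec_nonneg ?_ fun v => ?_
  · ext i j
    simp [traceDual, ← hstar]
  · rw [dotProduct_comm, ← trace_vecMulVec, ← mul_vecMulVec, trace_traceDual_mul]
    exact hpos _ (posSemidef_vecMulVec_self_star v)

theorem sum_single_kronecker_submatrix {m n κ α : Type*} [Fintype m] [Fintype n]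
    [DecidableEq m] [DecidableEq n] [NonAssocSemiring α] (z : Matrix (m × ι) (n × κ) α) :
    ∑ B, ∑ B', single B B' 1 ⊗ₖ z.submatrix (B, ·) (B', ·) = z := by
  ext ⟨A, i⟩ ⟨A', j⟩
  simp [sum_apply, single_apply, ite_and]

@[simp]
theorem kroneckerBilinear_apply_apply {l m n p α : Type*} [CommSemiring R] [Semiring α]
    [Algebra R α] (A : Matrix l m α) (B : Matrix n p α) :
    kroneckerBilinear (R := R) A B = A ⊗ₖ B :=
  rfl

theorem kronecker_one_conj_kronecker {m : Type*} [Fintype m] [Fintype ι] [DecidableEq ι]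
    [CommSemiring R] [StarRing R] (l u : Matrix m m R) (a : Matrix ι ι R) :
    l ⊗ₖ (1 : Matrix ι ι R) * (u ⊗ₖ a) * (l ⊗ₖ (1 : Matrix ι ι R))ᴴ = (l * u * lᴴ) ⊗ₖ a := by
  rw [conjTranspose_kronecker, conjTranspose_one, ← mul_kronecker_mul, ← mul_kronecker_mul,
    one_mul, mul_one]

end Matrix

namespace SL2

/-- `diagonal weightDiag` has determinant `1`, and conjugation by it scales the matrix unit
`E_{AA'}` by `weightDiag A * conj (weightDiag A')`, which takes the four distinct values
`2, i, -i, 1/2`. -/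
noncomputable def weightDiag : Fin 2 → ℂ := ![1 + Complex.I, (1 - Complex.I) / 2]

theorem det_diagonal_weightDiag : (diagonal weightDiag).det = 1 := by
  simp [weightDiag, Fin.prod_univ_two, Complex.ext_iff]
  norm_num

theorem weight_injective :
    Function.Injective fun p : Fin 2 × Fin 2 => weightDiag p.1 * star (weightDiag p.2) := by
  rintro ⟨A, A'⟩ ⟨B, B'⟩ h
  fin_cases A <;> fin_cases A' <;> fin_cases B <;> fin_cases B' <;>
    simp_all [weightDiag, Complex.ext_iff] <;> norm_num at h

variable (T : 𝕄₂ →ₗ[ℂ] 𝕄₂)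

theorem apply_single_apply_eq_zero
    (hT : ∀ l : 𝕄₂, l.det = 1 → ∀ u, T (l * u * lᴴ) = l * T u * lᴴ)
    {B B' A A' : Fin 2} (h : (B, B') ≠ (A, A')) : T (single B B' 1) A A' = 0 := by
  have hconj : diagonal weightDiag * single B B' 1 * (diagonal weightDiag)ᴴ
      = (weightDiag B * star (weightDiag B')) • single B B' (1 : ℂ) := by
    ext i j
    rw [diagonal_mul_mul_conjTranspose_apply, Matrix.smul_apply, single_apply]
    split_ifs with hij
    · obtain ⟨rfl, rfl⟩ := hij; simp
    · simp
  have hentry := congr_fun₂ (hT _ det_diagonal_weightDiag (single B B' 1)) A A'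
  rw [hconj, map_smul, Matrix.smul_apply, smul_eq_mul,
    diagonal_mul_mul_conjTranspose_apply] at hentry
  have hne : weightDiag B * star (weightDiag B') - weightDiag A * star (weightDiag A') ≠ 0 :=
    sub_ne_zero.mpr fun he => h (weight_injective he)
  exact (mul_eq_zero.mp (by linear_combination hentry)).resolve_left hne

theorem apply_single_eq_smul
    (hT : ∀ l : 𝕄₂, l.det = 1 → ∀ u, T (l * u * lᴴ) = l * T u * lᴴ) (B B' : Fin 2) :
    T (single B B' 1) = T (single B B' 1) B B' • single B B' 1 := by
  ext A A'
  by_cases h : (B, B') = (A, A')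
  · obtain ⟨rfl, rfl⟩ := Prod.mk.inj h
    simp
  · rw [apply_single_apply_eq_zero T hT h, Matrix.smul_apply,
      single_apply_of_ne _ _ _ _ _ (by simpa using h), smul_zero]

theorem apply_single_apply_same
    (hT : ∀ l : 𝕄₂, l.det = 1 → ∀ u, T (l * u * lᴴ) = l * T u * lᴴ) (B B' : Fin 2) :
    T (single B B' 1) B B' = T (single 0 0 1) 0 0 := by
  let l : 𝕄₂ := !![1, 0; 1, 1]
  have hl : l.det = 1 := by simp [l, det_fin_two]
  have hJ : l * single 0 0 1 * lᴴ = of fun _ _ => 1 := by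
    ext i j; fin_cases i <;> fin_cases j <;> simp [l, vecMul, dotProduct, Fin.sum_univ_two]
  have hTJ : T (of fun _ _ => 1) = of fun C C' => T (single C C' 1) C C' := by
    have hsingle (C C' : Fin 2) :
        T (single C C' 1) = single C C' (T (single C C' 1) C C') := by
      conv_lhs => rw [apply_single_eq_smul T hT C C']
      rw [smul_single, smul_eq_mul, mul_one]
    calc T (of fun _ _ => 1) = ∑ C, ∑ C', T (single C C' 1) := by
          simp only [← sum_sum_single, map_sum]
      _ = ∑ C, ∑ C', single C C' (T (single C C' 1) C C') :=
          Finset.sum_congr rfl fun C _ => Finset.sum_congr rfl fun C' _ => hsingle C C'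
      _ = _ := sum_sum_single _
  have := congr_fun₂ (hT l hl (single 0 0 1)) B B'
  rw [hJ, hTJ, apply_single_eq_smul T hT 0 0, Matrix.mul_smul, Matrix.smul_mul, hJ] at this
  simpa using this

theorem eq_smul_id_of_conj_equivariant
    (hT : ∀ l : 𝕄₂, l.det = 1 → ∀ u, T (l * u * lᴴ) = l * T u * lᴴ) :
    T = T (single 0 0 1) 0 0 • LinearMap.id := by
  refine Matrix.ext_linearMap ℂ fun B B' => LinearMap.ext_ring ?_
  simp only [LinearMap.comp_apply, singleLinearMap_apply, LinearMap.smul_apply, LinearMap.id_apply]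
  rw [apply_single_eq_smul T hT, apply_single_apply_same T hT]

end SL2

section Covariant

variable {ι : Type*} (Φ : Matrix (Fin 2 × ι) (Fin 2 × ι) ℂ →ₗ[ℂ] 𝕄₂)

noncomputable def blockFunctional : Matrix ι ι ℂ →ₗ[ℂ] ℂ :=
  entryLinearMap ℂ ℂ 0 0 ∘ₗ Φ ∘ₗ kroneckerBilinear (R := ℂ) (single 0 0 1)

theorem apply_kronecker_eq_smul [Fintype ι] [DecidableEq ι]
    (hcov : ∀ l : 𝕄₂, l.det = 1 → ∀ z,
      Φ (l ⊗ₖ (1 : Matrix ι ι ℂ) * z * (l ⊗ₖ (1 : Matrix ι ι ℂ))ᴴ) = l * Φ z * lᴴ)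
    (u : 𝕄₂) (a : Matrix ι ι ℂ) : Φ (u ⊗ₖ a) = blockFunctional Φ a • u := by
  let T : 𝕄₂ →ₗ[ℂ] 𝕄₂ := Φ ∘ₗ (kroneckerBilinear (R := ℂ)).flip a
  have hT : ∀ l : 𝕄₂, l.det = 1 → ∀ u, T (l * u * lᴴ) = l * T u * lᴴ := fun l hl u => by
    simpa [T, kronecker_one_conj_kronecker] using hcov l hl (u ⊗ₖ a)
  simpa [T, blockFunctional] using LinearMap.congr_fun (SL2.eq_smul_id_of_conj_equivariant T hT) u

theorem apply_apply_eq_blockFunctional [Fintype ι] [DecidableEq ι]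
    (hcov : ∀ l : 𝕄₂, l.det = 1 → ∀ z,
      Φ (l ⊗ₖ (1 : Matrix ι ι ℂ) * z * (l ⊗ₖ (1 : Matrix ι ι ℂ))ᴴ) = l * Φ z * lᴴ)
    (z : Matrix (Fin 2 × ι) (Fin 2 × ι) ℂ) (A A' : Fin 2) :
    Φ z A A' = blockFunctional Φ (z.submatrix (A, ·) (A', ·)) := by
  conv_lhs => rw [← sum_single_kronecker_submatrix z]
  simp only [map_sum, apply_kronecker_eq_smul Φ hcov, Matrix.sum_apply]
  simp [single_apply, ite_and]

theorem blockFunctional_conjTranspose (hstar : ∀ z, Φ zᴴ = (Φ z)ᴴ) (a : Matrix ι ι ℂ) :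
    blockFunctional Φ aᴴ = star (blockFunctional Φ a) := by
  have h := congr_fun₂ (hstar (single 0 0 1 ⊗ₖ a)) 0 0
  rwa [conjTranspose_kronecker, conjTranspose_single, star_one, conjTranspose_apply] at h

theorem blockFunctional_nonneg [Fintype ι] (hpos : ∀ z, z.PosSemidef → (Φ z).PosSemidef)
    {a : Matrix ι ι ℂ} (ha : a.PosSemidef) : 0 ≤ blockFunctional Φ a := by
  have hsingle : (single 0 0 1 : 𝕄₂).PosSemidef := by
    rw [single_eq_single_vecMulVec_single]
    simpa using posSemidef_vecMulVec_self_star (Pi.single (0 : Fin 2) (1 : ℂ))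
  exact (hpos _ (hsingle.kronecker ha)).diag_nonneg

theorem exists_posSemidef_trace_eq_one_of_covariant [Fintype ι] [DecidableEq ι]
    (hcov : ∀ l : 𝕄₂, l.det = 1 → ∀ z,
      Φ (l ⊗ₖ (1 : Matrix ι ι ℂ) * z * (l ⊗ₖ (1 : Matrix ι ι ℂ))ᴴ) = l * Φ z * lᴴ)
    (hstar : ∀ z, Φ zᴴ = (Φ z)ᴴ) (hone : Φ 1 = 1)
    (hpos : ∀ z, z.PosSemidef → (Φ z).PosSemidef) :
    ∃ σ : Matrix ι ι ℂ, σ.PosSemidef ∧ σ.trace = 1 ∧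
      ∀ z A A', Φ z A A' = ∑ i, ∑ j, σ j i * z (A, i) (A', j) := by
  refine ⟨traceDual (blockFunctional Φ),
    posSemidef_traceDual _ (blockFunctional_conjTranspose Φ hstar)
      fun a => blockFunctional_nonneg Φ hpos, ?_, fun z A A' => ?_⟩
  · have h := congr_fun₂ (apply_kronecker_eq_smul Φ hcov 1 1) 0 0
    rw [one_kronecker_one, hone] at h
    simpa [← trace_traceDual_mul _ 1] using h.symm
  · rw [apply_apply_eq_blockFunctional Φ hcov, ← trace_traceDual_mul, trace, Finset.sum_comm]
    simp [mul_apply]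

end Covariant

theorem stmt18_general (n : ℕ)
    (ρ : ↥(selfAdjoint (Matrix (Fin 2 × Fin n) (Fin 2 × Fin n) ℂ)) →ₗ[ℝ]
         ↥(selfAdjoint (Matrix (Fin 2) (Fin 2) ℂ)))
    (hinv : ∀ l : Matrix (Fin 2) (Fin 2) ℂ, l.det = 1 →
      ∀ b : Matrix (Fin 2) (Fin 2) ℂ, b.IsHermitian →
      ∀ x y : ↥(selfAdjoint (Matrix (Fin 2 × Fin n) (Fin 2 × Fin n) ℂ)),
        (y : Matrix (Fin 2 × Fin n) (Fin 2 × Fin n) ℂ)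
            = Matrix.kroneckerMap (· * ·) l (1 : Matrix (Fin n) (Fin n) ℂ)
                * (x : Matrix (Fin 2 × Fin n) (Fin 2 × Fin n) ℂ)
                * (Matrix.kroneckerMap (· * ·) l (1 : Matrix (Fin n) (Fin n) ℂ))ᴴ
              + Matrix.kroneckerMap (· * ·) b (1 : Matrix (Fin n) (Fin n) ℂ) →
        (ρ y : Matrix (Fin 2) (Fin 2) ℂ) = l * (ρ x : Matrix (Fin 2) (Fin 2) ℂ) * lᴴ + b)
    (hcausal : ∀ x : ↥(selfAdjoint (Matrix (Fin 2 × Fin n) (Fin 2 × Fin n) ℂ)),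
      (x : Matrix (Fin 2 × Fin n) (Fin 2 × Fin n) ℂ).PosSemidef →
      (ρ x : Matrix (Fin 2) (Fin 2) ℂ).PosSemidef) :
    ∃ σ : Matrix (Fin n) (Fin n) ℂ, σ.PosSemidef ∧ σ.trace = 1 ∧
      ∀ x : ↥(selfAdjoint (Matrix (Fin 2 × Fin n) (Fin 2 × Fin n) ℂ)), ∀ A A' : Fin 2,
        (ρ x : Matrix (Fin 2) (Fin 2) ℂ) A A'
          = ∑ i : Fin n, ∑ j : Fin n,
              σ j i * (x : Matrix (Fin 2 × Fin n) (Fin 2 × Fin n) ℂ) (A, i) (A', j) := by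
  set Φ := ρ.complexifySelfAdjoint
  have hcov : ∀ l : Matrix (Fin 2) (Fin 2) ℂ, l.det = 1 → ∀ z,
      Φ (l ⊗ₖ (1 : Matrix (Fin n) (Fin n) ℂ) * z * (l ⊗ₖ (1 : Matrix (Fin n) (Fin n) ℂ))ᴴ)
        = l * Φ z * lᴴ := fun l hl =>
    ρ.complexifySelfAdjoint_conj _ _ fun x y hy => by
      simpa [star_eq_conjTranspose] using
        hinv l hl 0 isHermitian_zero x y (by simp [hy, star_eq_conjTranspose])
  have hone : Φ 1 = 1 := by
    rw [ρ.complexifySelfAdjoint_of_isSelfAdjoint (IsSelfAdjoint.one _)]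
    exact (hinv 1 det_one 1 isHermitian_one 0 1 (by simp)).trans (by simp)
  have hpos : ∀ z, z.PosSemidef → (Φ z).PosSemidef := fun z hz => by
    rw [ρ.complexifySelfAdjoint_of_isSelfAdjoint hz.isHermitian]
    exact hcausal _ hz
  obtain ⟨σ, hσ, htr, hΦ⟩ := exists_posSemidef_trace_eq_one_of_covariant Φ hcov
    ρ.complexifySelfAdjoint_star hone hpos
  exact ⟨σ, hσ, htr, fun x A A' => by
    rw [← hΦ, ρ.complexifySelfAdjoint_of_isSelfAdjoint x.prop]⟩

/-- Any real-linear, Poincaré invariant, causal map from the quantum space-time of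
Hermitian operators on ℂ² ⊗ ℂⁿ to Minkowski space (Hermitian 2×2 matrices) is given
by a density matrix σ on the internal space: ρ(x)^{AA'} = Σ_{ij} σ^j_i x^{AA'i}_j. -/
theorem stmt18 (n : ℕ) (hn : 1 ≤ n)
    (ρ : ↥(selfAdjoint (Matrix (Fin 2 × Fin n) (Fin 2 × Fin n) ℂ)) →ₗ[ℝ]
         ↥(selfAdjoint (Matrix (Fin 2) (Fin 2) ℂ)))
    (hinv : ∀ l : Matrix (Fin 2) (Fin 2) ℂ, l.det = 1 →
      ∀ b : Matrix (Fin 2) (Fin 2) ℂ, b.IsHermitian →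
      ∀ x y : ↥(selfAdjoint (Matrix (Fin 2 × Fin n) (Fin 2 × Fin n) ℂ)),
        (y : Matrix (Fin 2 × Fin n) (Fin 2 × Fin n) ℂ)
            = Matrix.kroneckerMap (· * ·) l (1 : Matrix (Fin n) (Fin n) ℂ)
                * (x : Matrix (Fin 2 × Fin n) (Fin 2 × Fin n) ℂ)
                * (Matrix.kroneckerMap (· * ·) l (1 : Matrix (Fin n) (Fin n) ℂ))ᴴ
              + Matrix.kroneckerMap (· * ·) b (1 : Matrix (Fin n) (Fin n) ℂ) →
        (ρ y : Matrix (Fin 2) (Fin 2) ℂ) = l * (ρ x : Matrix (Fin 2) (Fin 2) ℂ) * lᴴ + b)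
    (hcausal : ∀ x : ↥(selfAdjoint (Matrix (Fin 2 × Fin n) (Fin 2 × Fin n) ℂ)),
      (x : Matrix (Fin 2 × Fin n) (Fin 2 × Fin n) ℂ).PosSemidef →
      (ρ x : Matrix (Fin 2) (Fin 2) ℂ).PosSemidef) :
    ∃ σ : Matrix (Fin n) (Fin n) ℂ, σ.PosSemidef ∧ σ.trace = 1 ∧
      ∀ x : ↥(selfAdjoint (Matrix (Fin 2 × Fin n) (Fin 2 × Fin n) ℂ)), ∀ A A' : Fin 2,
        (ρ x : Matrix (Fin 2) (Fin 2) ℂ) A A'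
          = ∑ i : Fin n, ∑ j : Fin n,
              σ j i * (x : Matrix (Fin 2 × Fin n) (Fin 2 × Fin n) ℂ) (A, i) (A', j) :=
  stmt18_general n ρ hinv hcausal
end
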